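/- Let X be a finite connected pre-ordered set, R a 2-torsion free commutative ring with unity, and L a Lie triple derivation of I(X,R) with coefficients C^{ij}_{xy}. Then C^{ii}_{ij} + C^{jj}_{ij} = 0 for all i < j. -/

import Mathlib

open IncidenceAlgebra
open scoped Classical

variable {R X : Type*}

/-- The matrix unit `e_{x y}` of the incidence algebra (zero if `¬ x ≤ y`). -/
noncomputable def matrixUnit [CommRing R] [Preorder X] [DecidableEq X] (x y : X) :
    IncidenceAlgebra R X :=
  ⟨fun u v => if u = x ∧ v = y ∧ x ≤ y then 1 else 0, fun a b hab => by
    try dsimp only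
    split_ifs with h
    · exact absurd (by rw [h.1, h.2.1]; exact h.2.2) hab
    · rfl⟩

/-- The Lie bracket `[f,g] = fg - gf`. -/
def lieBr {A : Type*} [Ring A] (f g : A) : A := f * g - g * f

/-- `L` is a Lie triple derivation of the incidence algebra. -/
def IsLieTripleDer [CommRing R] [Preorder X] [DecidableEq X] [LocallyFiniteOrder X]
    (L : IncidenceAlgebra R X →ₗ[R] IncidenceAlgebra R X) : Prop :=
  ∀ f g h : IncidenceAlgebra R X,
    L (lieBr (lieBr f g) h) =
      lieBr (lieBr (L f) g) h + lieBr (lieBr f (L g)) h + lieBr (lieBr f g) (L h)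

/-- `X` is connected: any two points are joined by a chain of comparabilities. -/
def OrdConnected' (X : Type*) [Preorder X] : Prop :=
  ∀ x y : X, Relation.ReflTransGen (fun a b : X => a ≤ b ∨ b ≤ a) x y

/-- `R` is 2-torsion free. -/
def TwoTorsionFree (R : Type*) [CommRing R] : Prop := ∀ r : R, r + r = 0 → r = 0

/-!
For `i ≠ j` the idempotents `e_ii` and `e_jj` commute, so the triple-derivation identity at
`(e_ii, e_jj, e_jj)` reads `[[L e_ii, e_jj], e_jj] + [[e_ii, L e_jj], e_jj] = 0`. Multiplying by
`e_jj` on the right keeps column `j` and on the left keeps row `j`, so the `(i, j)` entries of these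
two brackets are `L(e_ii)_{ij}` and `L(e_jj)_{ij}`.
-/

lemma matrixUnit_apply [CommRing R] [Preorder X] [DecidableEq X] (x y u v : X) :
    (matrixUnit x y : IncidenceAlgebra R X) u v = if u = x ∧ v = y ∧ x ≤ y then 1 else 0 := rfl

lemma lieBr_zero_left {A : Type*} [Ring A] (f : A) : lieBr 0 f = 0 := by
  simp [lieBr]

lemma IsLieTripleDer.lieBr_lieBr_map_add_eq_zero [CommRing R] [Preorder X] [DecidableEq X]
    [LocallyFiniteOrder X] {L : IncidenceAlgebra R X →ₗ[R] IncidenceAlgebra R X}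
    (hL : IsLieTripleDer L) {f g : IncidenceAlgebra R X} (hfg : lieBr f g = 0)
    (h : IncidenceAlgebra R X) :
    lieBr (lieBr (L f) g) h + lieBr (lieBr f (L g)) h = 0 := by
  simpa [hfg, lieBr_zero_left] using (hL f g h).symm

section MatrixUnit

variable [CommRing R] [Preorder X] [DecidableEq X] [LocallyFiniteOrder X]

lemma mul_matrixUnit_self_apply (f : IncidenceAlgebra R X) (j x y : X) :
    (f * matrixUnit j j : IncidenceAlgebra R X) x y = if y = j then f x y else 0 := by
  split_ifs with hy
  · subst hy
    by_cases hxy : x ≤ y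
    · rw [mul_apply, Finset.sum_eq_single_of_mem y (Finset.right_mem_Icc.2 hxy)]
      · simp [matrixUnit_apply]
      · intro z _ hz
        simp [matrixUnit_apply, hz]
    · rw [apply_eq_zero_of_not_le hxy, apply_eq_zero_of_not_le hxy]
  · refine Finset.sum_eq_zero fun z _ => ?_
    simp [matrixUnit_apply, hy]

lemma matrixUnit_self_mul_apply (f : IncidenceAlgebra R X) (i x y : X) :
    (matrixUnit i i * f : IncidenceAlgebra R X) x y = if x = i then f x y else 0 := by
  split_ifs with hx
  · subst hx
    by_cases hxy : x ≤ y
    · rw [mul_apply, Finset.sum_eq_single_of_mem x (Finset.left_mem_Icc.2 hxy)]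
      · simp [matrixUnit_apply]
      · intro z _ hz
        simp [matrixUnit_apply, hz]
    · rw [apply_eq_zero_of_not_le hxy, apply_eq_zero_of_not_le hxy]
  · refine Finset.sum_eq_zero fun z _ => ?_
    simp [matrixUnit_apply, hx]

lemma lieBr_matrixUnit_self_eq_zero_of_ne {i j : X} (hij : i ≠ j) :
    lieBr (matrixUnit i i : IncidenceAlgebra R X) (matrixUnit j j) = 0 := by
  ext x y
  simp only [lieBr, IncidenceAlgebra.sub_apply, mul_matrixUnit_self_apply,
    matrixUnit_apply, IncidenceAlgebra.zero_apply]
  grind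

lemma lieBr_lieBr_matrixUnit_self_right_apply_of_ne (f : IncidenceAlgebra R X) {i j : X}
    (hij : i ≠ j) :
    lieBr (lieBr f (matrixUnit j j)) (matrixUnit j j) i j = f i j := by
  simp only [lieBr, IncidenceAlgebra.sub_apply, mul_matrixUnit_self_apply, matrixUnit_self_mul_apply]
  simp [hij]

lemma lieBr_lieBr_matrixUnit_self_left_apply_of_ne (g : IncidenceAlgebra R X) {i j : X}
    (hij : i ≠ j) :
    lieBr (lieBr (matrixUnit i i) g) (matrixUnit j j) i j = g i j := by
  simp only [lieBr, IncidenceAlgebra.sub_apply, mul_matrixUnit_self_apply, matrixUnit_self_mul_apply]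
  simp [hij, Ne.symm hij]

end MatrixUnit

theorem lieTripleDer_rel_R1_general [CommRing R] [Preorder X] [DecidableEq X]
    [LocallyFiniteOrder X]
    (L : IncidenceAlgebra R X →ₗ[R] IncidenceAlgebra R X) (hL : IsLieTripleDer L) :
    ∀ i j : X, i ≤ j → i ≠ j →
      L (matrixUnit i i) i j + L (matrixUnit j j) i j = 0 := by
  intro i j _ hij
  have h := hL.lieBr_lieBr_map_add_eq_zero (lieBr_matrixUnit_self_eq_zero_of_ne hij) (matrixUnit j j)
  have hij_entry := congr($h i j)
  rwa [IncidenceAlgebra.add_apply, lieBr_lieBr_matrixUnit_self_right_apply_of_ne _ hij,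
    lieBr_lieBr_matrixUnit_self_left_apply_of_ne _ hij, IncidenceAlgebra.zero_apply]
    at hij_entry

/-- relation (R1). `C^{ii}_{ij} + C^{jj}_{ij} = 0` for `i < j`. -/
theorem lieTripleDer_rel_R1 [CommRing R] [Preorder X] [DecidableEq X]
    [Fintype X] [LocallyFiniteOrder X]
    (htf : TwoTorsionFree R) (hconn : OrdConnected' X)
    (L : IncidenceAlgebra R X →ₗ[R] IncidenceAlgebra R X) (hL : IsLieTripleDer L) :
    ∀ i j : X, i ≤ j → i ≠ j →
      L (matrixUnit i i) i j + L (matrixUnit j j) i j = 0 :=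
  lieTripleDer_rel_R1_general L hL
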